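/- arXiv:1506.02738 — 4 statements merged into one kernel-verified Lean document; each statement's English description precedes it below -/
import Mathlib

section
/- Let k > 0, d > 0, M ∈ [0,1), K₀ = kd/(π√(1−M²)), and let n ∈ ℕ with n < K₀, so that β±_n = (−kM ± √(k² − n²π²(1−M²)/d²))/(1−M²) are real. Let L > 0, S > 0, set I = L + iS, and define A±_n = ∓ e^{iβ∓_n I}/(e^{iβ⁺_n I} − e^{iβ⁻_n I}) (the denominator being nonzero). Then |A⁻_n/A⁺_n| = e^{−(2k/(1−M²))√(1 − n²/K₀²)·S}. -/
/-! The two modal exponentials `e^{iβ±I}` have moduli `e^{-β±S}`, so the common denominator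
cancels and `|A⁻/A⁺| = e^{-(β⁺-β⁻)S}`; the gap `β⁺-β⁻` is `2√(k² - n²π²(1-M²)/d²)/(1-M²)`, and the
radicand is `k²(1 - n²/K₀²)`. -/

open Complex

lemma norm_exp_I_mul_ofReal_mul (β : ℝ) (z : ℂ) :
    ‖exp (I * β * z)‖ = Real.exp (-(β * z.im)) := by
  rw [norm_exp]
  congr 1
  simp [mul_re, mul_im]

lemma exp_I_mul_ofReal_mul_ne {β β' : ℝ} {z : ℂ} (hβ : β ≠ β') (hz : z.im ≠ 0) :
    exp (I * β * z) ≠ exp (I * β' * z) := by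
  intro h
  have hnorm := congrArg (‖·‖) h
  simp only [norm_exp_I_mul_ofReal_mul, Real.exp_eq_exp, neg_inj, mul_left_inj' hz] at hnorm
  exact hβ hnorm

lemma div_sub_div_neg_div_sub {K : Type*} [Field K] {u v : K} (huv : u ≠ v) (hv : v ≠ 0) :
    u / (u - v) / (-v / (u - v)) = -(u / v) := by
  have : u - v ≠ 0 := sub_ne_zero.mpr huv
  field_simp

lemma norm_modal_ratio {β β' : ℝ} {z : ℂ} (hβ : β ≠ β') (hz : z.im ≠ 0) :
    ‖exp (I * β * z) / (exp (I * β * z) - exp (I * β' * z))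
        / (-exp (I * β' * z) / (exp (I * β * z) - exp (I * β' * z)))‖
      = Real.exp (-((β - β') * z.im)) := by
  rw [div_sub_div_neg_div_sub (exp_I_mul_ofReal_mul_ne hβ hz) (exp_ne_zero _), norm_neg,
    norm_div, norm_exp_I_mul_ofReal_mul, norm_exp_I_mul_ofReal_mul, ← Real.exp_sub]
  ring_nf

lemma dispersion_radicand_eq {k d M : ℝ} (hk : k ≠ 0) (hd : d ≠ 0) (hM : M ^ 2 < 1) (ν : ℝ) :
    k ^ 2 - ν ^ 2 * Real.pi ^ 2 * (1 - M ^ 2) / d ^ 2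
      = k ^ 2 * (1 - ν ^ 2 / (k * d / (Real.pi * Real.sqrt (1 - M ^ 2))) ^ 2) := by
  have hM' : 0 ≤ 1 - M ^ 2 := by linarith
  rw [div_pow, mul_pow, mul_pow, Real.sq_sqrt hM']
  have : 1 - M ^ 2 ≠ 0 := by linarith
  field_simp

lemma axial_wavenumber_gap {k d M : ℝ} (hk : 0 < k) (hd : d ≠ 0) (hM : M ^ 2 < 1) (ν : ℝ) :
    (-(k * M) + Real.sqrt (k ^ 2 - ν ^ 2 * Real.pi ^ 2 * (1 - M ^ 2) / d ^ 2)) / (1 - M ^ 2)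
      - (-(k * M) - Real.sqrt (k ^ 2 - ν ^ 2 * Real.pi ^ 2 * (1 - M ^ 2) / d ^ 2)) / (1 - M ^ 2)
      = 2 * k / (1 - M ^ 2)
          * Real.sqrt (1 - ν ^ 2 / (k * d / (Real.pi * Real.sqrt (1 - M ^ 2))) ^ 2) := by
  rw [dispersion_radicand_eq hk.ne' hd hM, Real.sqrt_mul (sq_nonneg k), Real.sqrt_sq hk.le]
  ring

lemma one_sub_sq_div_sq_pos {ν K : ℝ} (hν : 0 ≤ ν) (hνK : ν < K) : 0 < 1 - ν ^ 2 / K ^ 2 := by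
  have hK : 0 < K := hν.trans_lt hνK
  rw [sub_pos, div_lt_one (by positivity)]
  exact pow_lt_pow_left₀ hνK hν two_ne_zero

theorem stmt_10_general (k d M : ℝ) (hk : 0 < k) (hd : 0 < d) (hM0 : 0 ≤ M) (hM1 : M < 1)
    (K₀ : ℝ) (hK₀ : K₀ = k * d / (Real.pi * Real.sqrt (1 - M ^ 2)))
    (n : ℕ) (hn : (n : ℝ) < K₀)
    (βp βm : ℝ)
    (hβp : βp = (-(k * M) + Real.sqrt (k ^ 2 - (n : ℝ) ^ 2 * Real.pi ^ 2 * (1 - M ^ 2) / d ^ 2))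
      / (1 - M ^ 2))
    (hβm : βm = (-(k * M) - Real.sqrt (k ^ 2 - (n : ℝ) ^ 2 * Real.pi ^ 2 * (1 - M ^ 2) / d ^ 2))
      / (1 - M ^ 2))
    (L S : ℝ) (hS : 0 < S)
    (Iv : ℂ) (hIv : Iv = (L : ℂ) + Complex.I * (S : ℂ))
    (Ap Am : ℂ)
    (hAp : Ap = -Complex.exp (Complex.I * (βm : ℂ) * Iv)
      / (Complex.exp (Complex.I * (βp : ℂ) * Iv) - Complex.exp (Complex.I * (βm : ℂ) * Iv)))
    (hAm : Am = Complex.exp (Complex.I * (βp : ℂ) * Iv)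
      / (Complex.exp (Complex.I * (βp : ℂ) * Iv) - Complex.exp (Complex.I * (βm : ℂ) * Iv))) :
    ‖Am / Ap‖
      = Real.exp (-(2 * k / (1 - M ^ 2)) * Real.sqrt (1 - (n : ℝ) ^ 2 / K₀ ^ 2) * S) := by
  have hM : M ^ 2 < 1 := by nlinarith
  have hgap : βp - βm = 2 * k / (1 - M ^ 2) * Real.sqrt (1 - (n : ℝ) ^ 2 / K₀ ^ 2) := by
    rw [hβp, hβm, hK₀]
    exact axial_wavenumber_gap hk hd.ne' hM n
  have hβ : βp ≠ βm := by
    have hradicand := one_sub_sq_div_sq_pos n.cast_nonneg hn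
    have hM' : 0 < 1 - M ^ 2 := by linarith
    have hpos : 0 < βp - βm := by rw [hgap]; positivity
    exact (sub_pos.mp hpos).ne'
  have hIm : Iv.im = S := by simp [hIv]
  rw [hAm, hAp, norm_modal_ratio hβ (hIm ▸ hS.ne'), hgap, hIm]
  ring_nf

/-- Reflection coefficient amplitude for propagating modes (`n < K₀`):
with `I = L + iS` and `A±ₙ = ∓ e^{iβ∓ₙI}/(e^{iβ⁺ₙI} - e^{iβ⁻ₙI})`, one has
`|A⁻ₙ/A⁺ₙ| = e^{-(2k/(1-M²))√(1-n²/K₀²)·S}`. -/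
theorem stmt_10 (k d M : ℝ) (hk : 0 < k) (hd : 0 < d) (hM0 : 0 ≤ M) (hM1 : M < 1)
    (K₀ : ℝ) (hK₀ : K₀ = k * d / (Real.pi * Real.sqrt (1 - M ^ 2)))
    (n : ℕ) (hn : (n : ℝ) < K₀)
    (βp βm : ℝ)
    (hβp : βp = (-(k * M) + Real.sqrt (k ^ 2 - (n : ℝ) ^ 2 * Real.pi ^ 2 * (1 - M ^ 2) / d ^ 2))
      / (1 - M ^ 2))
    (hβm : βm = (-(k * M) - Real.sqrt (k ^ 2 - (n : ℝ) ^ 2 * Real.pi ^ 2 * (1 - M ^ 2) / d ^ 2))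
      / (1 - M ^ 2))
    (L S : ℝ) (hL : 0 < L) (hS : 0 < S)
    (Iv : ℂ) (hIv : Iv = (L : ℂ) + Complex.I * (S : ℂ))
    (Ap Am : ℂ)
    (hAp : Ap = -Complex.exp (Complex.I * (βm : ℂ) * Iv)
      / (Complex.exp (Complex.I * (βp : ℂ) * Iv) - Complex.exp (Complex.I * (βm : ℂ) * Iv)))
    (hAm : Am = Complex.exp (Complex.I * (βp : ℂ) * Iv)
      / (Complex.exp (Complex.I * (βp : ℂ) * Iv) - Complex.exp (Complex.I * (βm : ℂ) * Iv))) :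
    ‖Am / Ap‖
      = Real.exp (-(2 * k / (1 - M ^ 2)) * Real.sqrt (1 - (n : ℝ) ^ 2 / K₀ ^ 2) * S) :=
  stmt_10_general k d M hk hd hM0 hM1 K₀ hK₀ n hn βp βm hβp hβm L S hS Iv hIv Ap Am hAp hAm
end

section
/- Let k > 0, d > 0, M ∈ [0,1), K₀ = kd/(π√(1−M²)), and let n ∈ ℕ with n > K₀, so that β±_n = (−kM ± i√(n²π²(1−M²)/d² − k²))/(1−M²). Let L > 0, S > 0, set I = L + iS, and define A±_n = ∓ e^{iβ∓_n I}/(e^{iβ⁺_n I} − e^{iβ⁻_n I}) (the denominator being nonzero). Then |A⁻_n/A⁺_n| = e^{−(2kL/(1−M²))√(n²/K₀² − 1)}. -/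
/-!
The exponents of the two modal coefficients differ by `i(β⁺ₙ - β⁻ₙ)I = -(2γ/(1-M²))(L + iS)` with
`γ = √(n²π²(1-M²)/d² - k²) = k√(n²/K₀² - 1) > 0`, so `A⁻ₙ/A⁺ₙ = -e^{i(β⁺ₙ - β⁻ₙ)I}` has modulus
`e^{-2γL/(1-M²)}`; the same real part being nonzero is what keeps the common denominator away from `0`.
-/

open Complex

namespace Complex

theorem exp_ne_exp_of_re_ne {z w : ℂ} (h : z.re ≠ w.re) : exp z ≠ exp w := fun heq =>
  h (Real.exp_injective (by simpa only [norm_exp] using congrArg norm heq))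

theorem norm_div_neg_div_exp_sub_exp {z w : ℂ} (h : exp z ≠ exp w) :
    ‖exp z / (exp z - exp w) / (-exp w / (exp z - exp w))‖ = Real.exp (z.re - w.re) := by
  rw [neg_div, div_neg, div_div_div_cancel_right₀ (sub_ne_zero.mpr h), norm_neg, norm_div,
    norm_exp, norm_exp, Real.exp_sub]

theorem re_I_mul_div_mul_sub_conj (a γ c L S : ℝ) :
    (I * ((a + I * γ) / c) * (L + I * S)).re - (I * ((a - I * γ) / c) * (L + I * S)).re
      = -(2 * γ / c * L) := by
  have h : I * ((a + I * γ) / c) * (L + I * S) - I * ((a - I * γ) / c) * (L + I * S)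
      = ((-(2 * γ / c) : ℝ) : ℂ) * (L + I * S) := by
    push_cast
    linear_combination (2 * γ / c * (L + I * S)) * I_sq
  rw [← sub_re, h, re_ofReal_mul]
  simp

end Complex

theorem mul_sqrt_sq_div_sq_sub_one_eq_sqrt {k d c K x : ℝ} (hk : 0 < k) (hd : d ≠ 0) (hc : 0 < c)
    (hK : K = k * d / (Real.pi * Real.sqrt c)) :
    k * Real.sqrt (x ^ 2 / K ^ 2 - 1) = Real.sqrt (x ^ 2 * Real.pi ^ 2 * c / d ^ 2 - k ^ 2) := by
  have hK2 : K ^ 2 = k ^ 2 * d ^ 2 / (Real.pi ^ 2 * c) := by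
    rw [hK, div_pow, mul_pow, mul_pow, Real.sq_sqrt hc.le]
  have h : k ^ 2 * (x ^ 2 / K ^ 2 - 1) = x ^ 2 * Real.pi ^ 2 * c / d ^ 2 - k ^ 2 := by
    rw [hK2]
    field_simp
  rw [← h, Real.sqrt_mul (sq_nonneg k), Real.sqrt_sq hk.le]

theorem stmt_11_general (k d M : ℝ) (hk : 0 < k) (hd : 0 < d) (hM0 : 0 ≤ M) (hM1 : M < 1)
    (K₀ : ℝ) (hK₀ : K₀ = k * d / (Real.pi * Real.sqrt (1 - M ^ 2)))
    (n : ℕ) (hn : K₀ < (n : ℝ))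
    (βp βm : ℂ)
    (hβp : βp = ((-(k * M) : ℝ) + Complex.I *
      (Real.sqrt ((n : ℝ) ^ 2 * Real.pi ^ 2 * (1 - M ^ 2) / d ^ 2 - k ^ 2) : ℝ))
      / ((1 - M ^ 2 : ℝ) : ℂ))
    (hβm : βm = ((-(k * M) : ℝ) - Complex.I *
      (Real.sqrt ((n : ℝ) ^ 2 * Real.pi ^ 2 * (1 - M ^ 2) / d ^ 2 - k ^ 2) : ℝ))
      / ((1 - M ^ 2 : ℝ) : ℂ))
    (L S : ℝ) (hL : 0 < L)
    (Iv : ℂ) (hIv : Iv = (L : ℂ) + Complex.I * (S : ℂ))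
    (Ap Am : ℂ)
    (hAp : Ap = -Complex.exp (Complex.I * βm * Iv)
      / (Complex.exp (Complex.I * βp * Iv) - Complex.exp (Complex.I * βm * Iv)))
    (hAm : Am = Complex.exp (Complex.I * βp * Iv)
      / (Complex.exp (Complex.I * βp * Iv) - Complex.exp (Complex.I * βm * Iv))) :
    ‖Am / Ap‖
      = Real.exp (-(2 * k * L / (1 - M ^ 2)) * Real.sqrt ((n : ℝ) ^ 2 / K₀ ^ 2 - 1)) := by
  have hc : 0 < 1 - M ^ 2 := by nlinarith
  have hK₀pos : 0 < K₀ := by rw [hK₀]; positivity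
  have hγ := mul_sqrt_sq_div_sq_sub_one_eq_sqrt (x := n) hk hd.ne' hc hK₀
  have hroot : 0 < Real.sqrt ((n : ℝ) ^ 2 / K₀ ^ 2 - 1) := by
    rw [Real.sqrt_pos, sub_pos, one_lt_div (by positivity)]
    exact pow_lt_pow_left₀ hn hK₀pos.le two_ne_zero
  have hre : (I * βp * Iv).re - (I * βm * Iv).re
      = -(2 * k * L / (1 - M ^ 2)) * Real.sqrt ((n : ℝ) ^ 2 / K₀ ^ 2 - 1) := by
    rw [hβp, hβm, hIv, re_I_mul_div_mul_sub_conj, ← hγ]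
    ring
  have hre_ne : (I * βp * Iv).re ≠ (I * βm * Iv).re := by
    rw [← sub_ne_zero, hre]
    exact (mul_neg_of_neg_of_pos (neg_neg_of_pos (by positivity)) hroot).ne
  rw [hAm, hAp, norm_div_neg_div_exp_sub_exp (exp_ne_exp_of_re_ne hre_ne), hre]

/-- Reflection coefficient amplitude for evanescent modes (`n > K₀`):
with `I = L + iS` and `A±ₙ = ∓ e^{iβ∓ₙI}/(e^{iβ⁺ₙI} - e^{iβ⁻ₙI})`, one has
`|A⁻ₙ/A⁺ₙ| = e^{-(2kL/(1-M²))√(n²/K₀²-1)}`. -/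
theorem stmt_11 (k d M : ℝ) (hk : 0 < k) (hd : 0 < d) (hM0 : 0 ≤ M) (hM1 : M < 1)
    (K₀ : ℝ) (hK₀ : K₀ = k * d / (Real.pi * Real.sqrt (1 - M ^ 2)))
    (n : ℕ) (hn : K₀ < (n : ℝ))
    (βp βm : ℂ)
    (hβp : βp = ((-(k * M) : ℝ) + Complex.I *
      (Real.sqrt ((n : ℝ) ^ 2 * Real.pi ^ 2 * (1 - M ^ 2) / d ^ 2 - k ^ 2) : ℝ))
      / ((1 - M ^ 2 : ℝ) : ℂ))
    (hβm : βm = ((-(k * M) : ℝ) - Complex.I *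
      (Real.sqrt ((n : ℝ) ^ 2 * Real.pi ^ 2 * (1 - M ^ 2) / d ^ 2 - k ^ 2) : ℝ))
      / ((1 - M ^ 2 : ℝ) : ℂ))
    (L S : ℝ) (hL : 0 < L) (hS : 0 < S)
    (Iv : ℂ) (hIv : Iv = (L : ℂ) + Complex.I * (S : ℂ))
    (Ap Am : ℂ)
    (hAp : Ap = -Complex.exp (Complex.I * βm * Iv)
      / (Complex.exp (Complex.I * βp * Iv) - Complex.exp (Complex.I * βm * Iv)))
    (hAm : Am = Complex.exp (Complex.I * βp * Iv)
      / (Complex.exp (Complex.I * βp * Iv) - Complex.exp (Complex.I * βm * Iv))) :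
    ‖Am / Ap‖
      = Real.exp (-(2 * k * L / (1 - M ^ 2)) * Real.sqrt ((n : ℝ) ^ 2 / K₀ ^ 2 - 1)) :=
  stmt_11_general k d M hk hd hM0 hM1 K₀ hK₀ n hn βp βm hβp hβm L S hL Iv hIv Ap Am hAp hAm
end

section
/- Let k > 0, d > 0, M ∈ [0,1), K₀ = kd/(π√(1−M²)), and n ∈ ℕ with n < K₀, so β±_n = (−kM ± √(k² − n²π²(1−M²)/d²))/(1−M²) are real with β⁺_n − β⁻_n = (2k/(1−M²))√(1 − n²/K₀²). Let L > 0 and S > 0 satisfy (2k/(1−M²))√(1 − n²/K₀²)·S ≥ ln 2, and define ν⁺_n = β⁺_n − (β⁺_n − β⁻_n)/(1 − e^{−i(β⁺_n−β⁻_n)(L + iS)}). Then |β⁺_n − ν⁺_n| ≤ (4k/(1−M²)) e^{−(2k/(1−M²))√(1 − n²/K₀²)·S}. -/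
/-!
Write `B = β⁺ₙ - β⁻ₙ = (2k/(1-M²))√(1-n²/K₀²) ≥ 0`. Then `β⁺ₙ - ν⁺ₙ = B / (1 - E)` with
`E = exp(-iB(L+iS))`, and `|E| = e^{BS} ≥ 2` by the hypothesis on `S`. Hence
`|1 - E| ≥ |E| - 1 ≥ |E|/2`, so `|β⁺ₙ - ν⁺ₙ| ≤ 2B e^{-BS}`, and `B ≤ 2k/(1-M²)`.
-/

open Complex

lemma norm_div_one_sub_le_of_two_le_norm (z E : ℂ) (hE : 2 ≤ ‖E‖) :
    ‖z / (1 - E)‖ ≤ 2 * ‖z‖ / ‖E‖ := by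
  have hlower : ‖E‖ / 2 ≤ ‖1 - E‖ :=
    calc ‖E‖ / 2 ≤ ‖E‖ - ‖(1 : ℂ)‖ := by rw [norm_one]; linarith
      _ ≤ ‖E - 1‖ := norm_sub_norm_le _ _
      _ = ‖1 - E‖ := norm_sub_rev _ _
  rw [norm_div, div_le_div_iff₀ (by linarith) (by linarith)]
  nlinarith [norm_nonneg z]

lemma norm_exp_neg_I_mul_mul_add_I_mul (B L S : ℝ) :
    ‖exp (-I * B * (L + I * S))‖ = Real.exp (B * S) := by
  rw [norm_exp]
  congr 1
  simp [mul_re, mul_im]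

lemma norm_div_one_sub_exp_le {B L S : ℝ} (hB : 0 ≤ B) (hBS : Real.log 2 ≤ B * S) :
    ‖(B : ℂ) / (1 - exp (-I * B * (L + I * S)))‖ ≤ 2 * B * Real.exp (-(B * S)) := by
  have hE : 2 ≤ ‖exp (-I * B * (L + I * S))‖ := by
    rw [norm_exp_neg_I_mul_mul_add_I_mul, ← Real.exp_log two_pos]
    exact Real.exp_le_exp.mpr hBS
  calc _ ≤ 2 * ‖(B : ℂ)‖ / ‖exp (-I * B * (L + I * S))‖ :=
        norm_div_one_sub_le_of_two_le_norm _ _ hE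
    _ = 2 * B * Real.exp (-(B * S)) := by
        rw [norm_exp_neg_I_mul_mul_add_I_mul, Complex.norm_of_nonneg hB, Real.exp_neg,
          div_eq_mul_inv]

lemma sqrt_sub_eq_mul_sqrt_one_sub_div_sq {k d M : ℝ} (hk : 0 < k) (hd : 0 < d)
    (hM : 0 < 1 - M ^ 2) (ξ : ℝ) :
    Real.sqrt (k ^ 2 - ξ ^ 2 * Real.pi ^ 2 * (1 - M ^ 2) / d ^ 2)
      = k * Real.sqrt (1 - ξ ^ 2 / (k * d / (Real.pi * Real.sqrt (1 - M ^ 2))) ^ 2) := by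
  have hK₀sq : (k * d / (Real.pi * Real.sqrt (1 - M ^ 2))) ^ 2
      = k ^ 2 * d ^ 2 / (Real.pi ^ 2 * (1 - M ^ 2)) := by
    rw [div_pow, mul_pow, mul_pow, Real.sq_sqrt hM.le]
  have hradicand : k ^ 2 - ξ ^ 2 * Real.pi ^ 2 * (1 - M ^ 2) / d ^ 2
      = k ^ 2 * (1 - ξ ^ 2 / (k * d / (Real.pi * Real.sqrt (1 - M ^ 2))) ^ 2) := by
    rw [hK₀sq]
    field_simp [hk.ne', hd.ne', hM.ne', Real.pi_pos.ne']
  rw [hradicand, Real.sqrt_mul (sq_nonneg k), Real.sqrt_sq hk.le]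

theorem stmt_14_general (k d M : ℝ) (hk : 0 < k) (hd : 0 < d) (hM0 : 0 ≤ M) (hM1 : M < 1)
    (K₀ : ℝ) (hK₀ : K₀ = k * d / (Real.pi * Real.sqrt (1 - M ^ 2)))
    (n : ℕ)
    (βp βm : ℝ)
    (hβp : βp = (-(k * M) + Real.sqrt (k ^ 2 - (n : ℝ) ^ 2 * Real.pi ^ 2 * (1 - M ^ 2) / d ^ 2))
      / (1 - M ^ 2))
    (hβm : βm = (-(k * M) - Real.sqrt (k ^ 2 - (n : ℝ) ^ 2 * Real.pi ^ 2 * (1 - M ^ 2) / d ^ 2))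
      / (1 - M ^ 2))
    (L S : ℝ)
    (hcond : Real.log 2 ≤ (2 * k / (1 - M ^ 2)) * Real.sqrt (1 - (n : ℝ) ^ 2 / K₀ ^ 2) * S)
    (ν : ℂ)
    (hν : ν = (βp : ℂ) - ((βp : ℂ) - (βm : ℂ)) /
      (1 - Complex.exp (-Complex.I * ((βp : ℂ) - (βm : ℂ)) * ((L : ℂ) + Complex.I * (S : ℂ))))) :
    ‖(βp : ℂ) - ν‖
      ≤ (4 * k / (1 - M ^ 2)) *
        Real.exp (-(2 * k / (1 - M ^ 2)) * Real.sqrt (1 - (n : ℝ) ^ 2 / K₀ ^ 2) * S) := by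
  have hM : 0 < 1 - M ^ 2 := by nlinarith
  set s := Real.sqrt (1 - (n : ℝ) ^ 2 / K₀ ^ 2)
  set B := 2 * k / (1 - M ^ 2) * s with hB
  have hs_le_one : s ≤ 1 :=
    Real.sqrt_le_one.mpr (by linarith [div_nonneg (sq_nonneg (n : ℝ)) (sq_nonneg K₀)])
  have hgap : βp - βm = B := by
    rw [hβp, hβm, sqrt_sub_eq_mul_sqrt_one_sub_div_sq hk hd hM, ← hK₀, hB]
    field_simp
    ring
  have hdiff : (βp : ℂ) - ν = (B : ℂ) / (1 - exp (-I * B * (L + I * S))) := by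
    rw [hν, ← hgap]
    push_cast
    ring
  have hB_le : B ≤ 2 * k / (1 - M ^ 2) :=
    mul_le_of_le_one_right (by positivity) hs_le_one
  calc ‖(βp : ℂ) - ν‖ ≤ 2 * B * Real.exp (-(B * S)) := by
        rw [hdiff]
        exact norm_div_one_sub_exp_le (by positivity) hcond
    _ ≤ 2 * (2 * k / (1 - M ^ 2)) * Real.exp (-(B * S)) := by gcongr
    _ = 4 * k / (1 - M ^ 2) * Real.exp (-(2 * k / (1 - M ^ 2)) * s * S) := by
        rw [neg_mul, neg_mul, hB]
        ring

/-- DtN error bound for propagating modes (`n < K₀`): with real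
`β±ₙ`, `β⁺ₙ - β⁻ₙ = (2k/(1-M²))√(1-n²/K₀²)`, and `(2k/(1-M²))√(1-n²/K₀²)·S ≥ ln 2`, the
PML DtN symbol `ν⁺ₙ = β⁺ₙ - (β⁺ₙ-β⁻ₙ)/(1 - e^{-i(β⁺ₙ-β⁻ₙ)(L+iS)})` satisfies
`|β⁺ₙ - ν⁺ₙ| ≤ (4k/(1-M²)) e^{-(2k/(1-M²))√(1-n²/K₀²)·S}`. -/
theorem stmt_14 (k d M : ℝ) (hk : 0 < k) (hd : 0 < d) (hM0 : 0 ≤ M) (hM1 : M < 1)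
    (K₀ : ℝ) (hK₀ : K₀ = k * d / (Real.pi * Real.sqrt (1 - M ^ 2)))
    (n : ℕ) (hn : (n : ℝ) < K₀)
    (βp βm : ℝ)
    (hβp : βp = (-(k * M) + Real.sqrt (k ^ 2 - (n : ℝ) ^ 2 * Real.pi ^ 2 * (1 - M ^ 2) / d ^ 2))
      / (1 - M ^ 2))
    (hβm : βm = (-(k * M) - Real.sqrt (k ^ 2 - (n : ℝ) ^ 2 * Real.pi ^ 2 * (1 - M ^ 2) / d ^ 2))
      / (1 - M ^ 2))
    (L S : ℝ) (hL : 0 < L) (hS : 0 < S)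
    (hcond : Real.log 2 ≤ (2 * k / (1 - M ^ 2)) * Real.sqrt (1 - (n : ℝ) ^ 2 / K₀ ^ 2) * S)
    (ν : ℂ)
    (hν : ν = (βp : ℂ) - ((βp : ℂ) - (βm : ℂ)) /
      (1 - Complex.exp (-Complex.I * ((βp : ℂ) - (βm : ℂ)) * ((L : ℂ) + Complex.I * (S : ℂ))))) :
    ‖(βp : ℂ) - ν‖
      ≤ (4 * k / (1 - M ^ 2)) *
        Real.exp (-(2 * k / (1 - M ^ 2)) * Real.sqrt (1 - (n : ℝ) ^ 2 / K₀ ^ 2) * S) :=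
  stmt_14_general k d M hk hd hM0 hM1 K₀ hK₀ n βp βm hβp hβm L S hcond ν hν
end

section
/- Let k > 0, d > 0, M ∈ [0,1), K₀ = kd/(π√(1−M²)), N₀ = ⌊K₀⌋, and n ∈ ℕ with n ≥ N₀ + 1 and n > K₀, so β±_n = (−kM ± i√(n²π²(1−M²)/d² − k²))/(1−M²) with β⁺_n − β⁻_n = (2ik/(1−M²))√(n²/K₀² − 1). Let L > 0 satisfy (2kL/(1−M²))√((N₀+1)²/K₀² − 1) ≥ ln 2, and define ν⁺_n = β⁺_n − (β⁺_n − β⁻_n)/(1 − e^{−i(β⁺_n−β⁻_n)(L + iS)}) for any S ≥ 0. Then |β⁺_n − ν⁺_n| ≤ (4k/(1−M²))·(n/K₀)·e^{−(2kL/(1−M²))√((N₀+1)²/K₀² − 1)}. -/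
/-!
Write `β⁺ − β⁻ = i c` with `c = (2k/(1−M²))√(n²/K₀² − 1) ≥ 0`, so that
`β⁺ − ν⁺ = i c / (1 − e^z)` with `z = c (L + iS)` and `Re z = cL`. Once `cL ≥ log 2`,
`|1 − e^z| ≥ e^{cL} − 1 ≥ e^{cL}/2`, whence `|β⁺ − ν⁺| ≤ 2c e^{−cL}`. The mode index only enters
through `c`, which is monotone in `n` (so `cL` dominates its value at `n = N₀ + 1`) and at most
`(2k/(1−M²)) n/K₀`.
-/

open Complex

lemma norm_div_one_sub_exp_le_of_log_two_le (w z : ℂ) (hz : Real.log 2 ≤ z.re) :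
    ‖w / (1 - exp z)‖ ≤ 2 * ‖w‖ * Real.exp (-z.re) := by
  have htwo : 2 ≤ Real.exp z.re := (Real.log_le_iff_le_exp two_pos).mp hz
  have hden : Real.exp z.re / 2 ≤ ‖1 - exp z‖ := by
    have := norm_sub_norm_le (exp z) 1
    rw [norm_exp, norm_one, norm_sub_rev] at this
    linarith
  rw [norm_div, div_le_iff₀ ((by positivity : (0 : ℝ) < _).trans_le hden)]
  calc ‖w‖ = 2 * ‖w‖ * Real.exp (-z.re) * (Real.exp z.re / 2) := by
        rw [Real.exp_neg]; field_simp
    _ ≤ 2 * ‖w‖ * Real.exp (-z.re) * ‖1 - exp z‖ := by gcongr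

lemma norm_I_mul_div_one_sub_exp_le {c : ℝ} (hc : 0 ≤ c) (L S : ℝ) (hcL : Real.log 2 ≤ c * L) :
    ‖c * I / (1 - exp (-I * (c * I) * (L + I * S)))‖ ≤ 2 * c * Real.exp (-(c * L)) := by
  have hexponent : -I * (c * I) * (L + I * S) = (c : ℂ) * (L + I * S) := by
    linear_combination (-(c : ℂ) * (L + I * S)) * I_sq
  have hre : ((c : ℂ) * (L + I * S)).re = c * L := by simp
  have := norm_div_one_sub_exp_le_of_log_two_le (c * I) _ (hre ▸ hcL)
  rwa [norm_mul, norm_I, mul_one, norm_real, Real.norm_of_nonneg hc, hre, ← hexponent] at this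

lemma ofReal_add_I_mul_div_sub_ofReal_sub_I_mul_div (a σ m : ℝ) (hm : m ≠ 0) :
    ((a : ℂ) + I * σ) / (m : ℂ) - ((a : ℂ) - I * σ) / (m : ℂ) = ((2 * σ / m : ℝ) : ℂ) * I := by
  have : (m : ℂ) ≠ 0 := ofReal_ne_zero.mpr hm
  push_cast
  field_simp
  ring

lemma Real.sqrt_sq_sub_one_le {a : ℝ} (ha : 0 ≤ a) : √(a ^ 2 - 1) ≤ a :=
  Real.sqrt_le_iff.mpr ⟨ha, by linarith⟩

lemma sqrt_duct_mode_eq {k d M K₀ : ℝ} (hk : 0 < k) (hd : d ≠ 0) (hM : M ^ 2 < 1)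
    (hK₀ : K₀ = k * d / (Real.pi * √(1 - M ^ 2))) (x : ℝ) :
    √(x ^ 2 * Real.pi ^ 2 * (1 - M ^ 2) / d ^ 2 - k ^ 2) = k * √(x ^ 2 / K₀ ^ 2 - 1) := by
  have hm : 0 < 1 - M ^ 2 := by linarith
  have hK₀sq : K₀ ^ 2 = k ^ 2 * d ^ 2 / (Real.pi ^ 2 * (1 - M ^ 2)) := by
    rw [hK₀, div_pow, mul_pow, mul_pow, Real.sq_sqrt hm.le]
  have harg : x ^ 2 * Real.pi ^ 2 * (1 - M ^ 2) / d ^ 2 - k ^ 2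
      = k ^ 2 * (x ^ 2 / K₀ ^ 2 - 1) := by
    rw [hK₀sq]; field_simp
  rw [harg, Real.sqrt_mul (sq_nonneg k), Real.sqrt_sq hk.le]

theorem stmt_15_general (k d M : ℝ) (hk : 0 < k) (hd : 0 < d) (hM0 : 0 ≤ M) (hM1 : M < 1)
    (K₀ : ℝ) (hK₀ : K₀ = k * d / (Real.pi * Real.sqrt (1 - M ^ 2)))
    (N₀ : ℕ)
    (n : ℕ) (hn1 : N₀ + 1 ≤ n)
    (βp βm : ℂ)
    (hβp : βp = ((-(k * M) : ℝ) + Complex.I *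
      (Real.sqrt ((n : ℝ) ^ 2 * Real.pi ^ 2 * (1 - M ^ 2) / d ^ 2 - k ^ 2) : ℝ))
      / ((1 - M ^ 2 : ℝ) : ℂ))
    (hβm : βm = ((-(k * M) : ℝ) - Complex.I *
      (Real.sqrt ((n : ℝ) ^ 2 * Real.pi ^ 2 * (1 - M ^ 2) / d ^ 2 - k ^ 2) : ℝ))
      / ((1 - M ^ 2 : ℝ) : ℂ))
    (L : ℝ) (hL : 0 < L)
    (hcond : Real.log 2 ≤
      (2 * k * L / (1 - M ^ 2)) * Real.sqrt (((N₀ : ℝ) + 1) ^ 2 / K₀ ^ 2 - 1))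
    (S : ℝ)
    (ν : ℂ)
    (hν : ν = βp - (βp - βm) /
      (1 - Complex.exp (-Complex.I * (βp - βm) * ((L : ℂ) + Complex.I * (S : ℂ))))) :
    ‖βp - ν‖
      ≤ (4 * k / (1 - M ^ 2)) * ((n : ℝ) / K₀) *
        Real.exp (-(2 * k * L / (1 - M ^ 2)) *
          Real.sqrt (((N₀ : ℝ) + 1) ^ 2 / K₀ ^ 2 - 1)) := by
  have hM : M ^ 2 < 1 := by nlinarith
  have hm : 0 < 1 - M ^ 2 := by linarith
  have hK₀pos : 0 < K₀ := by rw [hK₀]; positivity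
  obtain ⟨r, hr⟩ : ∃ r, √((n : ℝ) ^ 2 / K₀ ^ 2 - 1) = r := ⟨_, rfl⟩
  obtain ⟨c, hc⟩ : ∃ c, 2 * (k * r) / (1 - M ^ 2) = c := ⟨_, rfl⟩
  have hr0 : 0 ≤ r := hr ▸ Real.sqrt_nonneg _
  have hc0 : 0 ≤ c := hc ▸ by positivity
  have hdiff : βp - βm = c * I := by
    rw [hβp, hβm, ofReal_add_I_mul_div_sub_ofReal_sub_I_mul_div _ _ _ hm.ne',
      sqrt_duct_mode_eq hk hd.ne' hM hK₀, hr, hc]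
  have hcL : (2 * k * L / (1 - M ^ 2)) * √(((N₀ : ℝ) + 1) ^ 2 / K₀ ^ 2 - 1) ≤ c * L := by
    have : ((N₀ : ℝ) + 1) ≤ n := by exact_mod_cast hn1
    calc _ ≤ (2 * k * L / (1 - M ^ 2)) * r := by rw [← hr]; gcongr
      _ = c * L := by rw [← hc]; ring
  have hc_le : c ≤ 2 * k / (1 - M ^ 2) * ((n : ℝ) / K₀) := by
    have : r ≤ (n : ℝ) / K₀ := by
      rw [← hr, ← div_pow]
      exact Real.sqrt_sq_sub_one_le (by positivity)
    calc c = 2 * k / (1 - M ^ 2) * r := by rw [← hc]; ring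
      _ ≤ _ := by gcongr
  calc ‖βp - ν‖ = ‖c * I / (1 - exp (-I * (c * I) * (L + I * S)))‖ := by
        rw [hν, hdiff, sub_sub_cancel]
    _ ≤ 2 * c * Real.exp (-(c * L)) := norm_I_mul_div_one_sub_exp_le hc0 L S (hcond.trans hcL)
    _ ≤ 2 * (2 * k / (1 - M ^ 2) * ((n : ℝ) / K₀)) *
        Real.exp (-(2 * k * L / (1 - M ^ 2)) * √(((N₀ : ℝ) + 1) ^ 2 / K₀ ^ 2 - 1)) := by
        gcongr
        rw [neg_mul, neg_le_neg_iff]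
        exact hcL
    _ = _ := by ring

/-- DtN error bound for evanescent modes (`n ≥ N₀+1`, `n > K₀`,
`N₀ = ⌊K₀⌋`): with complex `β±ₙ` and `(2kL/(1-M²))√((N₀+1)²/K₀²-1) ≥ ln 2`, the PML DtN
symbol `ν⁺ₙ = β⁺ₙ - (β⁺ₙ-β⁻ₙ)/(1 - e^{-i(β⁺ₙ-β⁻ₙ)(L+iS)})` satisfies, for any `S ≥ 0`,
`|β⁺ₙ - ν⁺ₙ| ≤ (4k/(1-M²))(n/K₀) e^{-(2kL/(1-M²))√((N₀+1)²/K₀²-1)}`. -/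
theorem stmt_15 (k d M : ℝ) (hk : 0 < k) (hd : 0 < d) (hM0 : 0 ≤ M) (hM1 : M < 1)
    (K₀ : ℝ) (hK₀ : K₀ = k * d / (Real.pi * Real.sqrt (1 - M ^ 2)))
    (N₀ : ℕ) (hN₀ : N₀ = ⌊K₀⌋₊)
    (n : ℕ) (hn1 : N₀ + 1 ≤ n) (hn2 : K₀ < (n : ℝ))
    (βp βm : ℂ)
    (hβp : βp = ((-(k * M) : ℝ) + Complex.I *
      (Real.sqrt ((n : ℝ) ^ 2 * Real.pi ^ 2 * (1 - M ^ 2) / d ^ 2 - k ^ 2) : ℝ))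
      / ((1 - M ^ 2 : ℝ) : ℂ))
    (hβm : βm = ((-(k * M) : ℝ) - Complex.I *
      (Real.sqrt ((n : ℝ) ^ 2 * Real.pi ^ 2 * (1 - M ^ 2) / d ^ 2 - k ^ 2) : ℝ))
      / ((1 - M ^ 2 : ℝ) : ℂ))
    (L : ℝ) (hL : 0 < L)
    (hcond : Real.log 2 ≤
      (2 * k * L / (1 - M ^ 2)) * Real.sqrt (((N₀ : ℝ) + 1) ^ 2 / K₀ ^ 2 - 1))
    (S : ℝ) (hS : 0 ≤ S)
    (ν : ℂ)
    (hν : ν = βp - (βp - βm) /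
      (1 - Complex.exp (-Complex.I * (βp - βm) * ((L : ℂ) + Complex.I * (S : ℂ))))) :
    ‖βp - ν‖
      ≤ (4 * k / (1 - M ^ 2)) * ((n : ℝ) / K₀) *
        Real.exp (-(2 * k * L / (1 - M ^ 2)) *
          Real.sqrt (((N₀ : ℝ) + 1) ^ 2 / K₀ ^ 2 - 1)) :=
  stmt_15_general k d M hk hd hM0 hM1 K₀ hK₀ N₀ n hn1 βp βm hβp hβm L hL hcond S ν hν
end
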